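/- Let r = q/p ∈ (0,1) be a rational number in lowest terms and n ≥ 2 an integer. Every piece relative to the symmetrized set R generated by u_r^n has length strictly less than p, i.e., strictly less than half of the length 2p of the word u_r. -/

import Mathlib

/-!
Common setup: 2-bridge link groups, Heckoid groups, the words `u_s`,
Möbius transformations on `ℚ ∪ {∞}` (modelled as `Option ℚ`, with `none = ∞`),
the group `Γ_{r,n}`, continued fractions, and small–cancellation notions.
-/

/-- The free group `F` on the two generators `a`, `b`. -/
abbrev FG := FreeGroup (Fin 2)

namespace Heckoid

/-- The generator `a`. -/
def ga : FG := FreeGroup.of 0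

/-- The generator `b`. -/
def gb : FG := FreeGroup.of 1

/-- `ε_i = (−1)^⌊ i q / p ⌋`, as an element `±1` of `ℤ`. -/
def epsSign (q : ℤ) (p : ℕ) (i : ℕ) : ℤ := (-1) ^ (Int.fdiv ((i : ℤ) * q) (p : ℤ)).natAbs

/-- The letter at position `i`: `b` if `i` is odd, `a` if `i` is even. -/
def genAt (i : ℕ) : FG := if i % 2 = 1 then gb else ga

/-- `v = b^{ε₁} a^{ε₂} b^{ε₃} ⋯` (`p − 1` alternating letters). -/
def vWord (q : ℤ) (p : ℕ) : FG :=
  ((List.range (p - 1)).map fun i => genAt (i + 1) ^ epsSign q p (i + 1)).prod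

/-- The word `u_s` associated with a rational number `s = q/p` in lowest terms:
`u_s = a v b^{(−1)^q} v⁻¹` if `p` is odd, and `u_s = a v a⁻¹ v⁻¹` if `p` is even. -/
def uWord (s : ℚ) : FG :=
  if s.den % 2 = 1 then
    ga * vWord s.num s.den * gb ^ ((-1 : ℤ) ^ s.num.natAbs) * (vWord s.num s.den)⁻¹
  else
    ga * vWord s.num s.den * ga⁻¹ * (vWord s.num s.den)⁻¹

/-- The even Heckoid group `H(r;n) = ⟨a, b ∣ u_r^n⟩`. -/
abbrev HeckoidGroup (r : ℚ) (n : ℕ) := PresentedGroup ({uWord r ^ n} : Set FG)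

/-- The natural projection `F → H(r;n)`. -/
def hMk (r : ℚ) (n : ℕ) : FG →* HeckoidGroup r n := PresentedGroup.mk _

/-- The 2-bridge link group `G(K(s)) = ⟨a, b ∣ u_s⟩`. -/
abbrev TwoBridgeGroup (s : ℚ) := PresentedGroup ({uWord s} : Set FG)

/-- The natural projection `F → G(K(s))`. -/
def tMk (s : ℚ) : FG →* TwoBridgeGroup s := PresentedGroup.mk _

/-- An epimorphism `G(K(s)) → H(r;n)` is upper-meridian-pair-preserving if it is surjective and
the unordered pair of conjugacy classes of the images of `a`, `b` coincides with the unordered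
pair of the conjugacy classes of `a`, `b` in `H(r;n)`. -/
def IsUMPP (s r : ℚ) (n : ℕ) (φ : TwoBridgeGroup s →* HeckoidGroup r n) : Prop :=
  Function.Surjective φ ∧
    ((IsConj (φ (tMk s ga)) (hMk r n ga) ∧ IsConj (φ (tMk s gb)) (hMk r n gb)) ∨
     (IsConj (φ (tMk s ga)) (hMk r n gb) ∧ IsConj (φ (tMk s gb)) (hMk r n ga)))

/-! ### Möbius transformations of `ℚ ∪ {∞}` -/

/-- The Möbius transformation of the matrix `[[A,B],[C,D]]` as a function on
`ℚ ∪ {∞} = Option ℚ` (`none` is `∞`). -/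
def mfun (A B C D : ℚ) : Option ℚ → Option ℚ
  | none => if C = 0 then none else some (A / C)
  | some x => if C * x + D = 0 then none else some ((A * x + B) / (C * x + D))

theorem mfun_leftInv (A B C D : ℚ) (h : A * D - B * C ≠ 0) :
    Function.LeftInverse (mfun D (-B) (-C) A) (mfun A B C D) := by
  intro x
  cases x with
  | none =>
    by_cases hC : C = 0
    · simp [mfun, hC]
    · have h1 : -C * (A / C) + A = 0 := by field_simp; ring
      simp only [mfun, if_neg hC, if_pos h1]
  | some x =>
    by_cases hx : C * x + D = 0
    · have hC : C ≠ 0 := by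
        rintro rfl
        simp only [zero_mul, zero_add] at hx
        rw [hx] at h
        simp at h
      simp only [mfun, if_pos hx]
      have h2 : ¬(-C = 0) := by simpa using hC
      simp only [mfun, if_neg h2]
      congr 1
      field_simp
      linarith
    · have key : -C * ((A * x + B) / (C * x + D)) + A = (A * D - B * C) / (C * x + D) := by
        field_simp
        ring
      have hne : ¬(-C * ((A * x + B) / (C * x + D)) + A = 0) := by
        rw [key]
        exact div_ne_zero h hx
      simp only [mfun, if_neg hx, if_neg hne]
      congr 1
      have e1 : D * ((A * x + B) / (C * x + D)) + -B = ((A * D - B * C) * x) / (C * x + D) := by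
        rw [eq_div_iff hx]
        rw [add_mul, mul_assoc, div_mul_cancel₀ _ hx]
        ring
      rw [e1, key, div_eq_iff (div_ne_zero h hx)]
      field_simp

/-- The Möbius transformation of an invertible matrix `[[A,B],[C,D]]`, as a bijection of
`ℚ ∪ {∞}`. -/
def moebius (A B C D : ℚ) (h : A * D - B * C ≠ 0) : Equiv.Perm (Option ℚ) where
  toFun := mfun A B C D
  invFun := mfun D (-B) (-C) A
  left_inv := mfun_leftInv A B C D h
  right_inv := fun x => by
    have h' : D * A - -B * -C ≠ 0 := fun hc => h (by linear_combination hc)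
    have := mfun_leftInv D (-B) (-C) A h' x
    simpa using this

/-- `ρ(s) = −s`. -/
def rhoPerm : Equiv.Perm (Option ℚ) := moebius (-1) 0 0 1 (by norm_num)

/-- `ρ'(s) = 2 − s`. -/
def rhoPerm' : Equiv.Perm (Option ℚ) := moebius (-1) 2 0 1 (by norm_num)

/-- The parabolic Möbius transformation centered at `r = q/p`, translating by `m` units:
the Möbius transformation of `[[1+mpq, −mq²],[mp², 1−mpq]]`. -/
def cPerm (r : ℚ) (m : ℤ) : Equiv.Perm (Option ℚ) :=
  moebius (1 + (m : ℚ) * r.den * r.num) (-((m : ℚ) * r.num ^ 2)) ((m : ℚ) * r.den ^ 2)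
    (1 - (m : ℚ) * r.den * r.num) (ne_of_eq_of_ne (by ring) one_ne_zero)

/-- The group `Γ_{r,n}` (`m = 2n`): the subgroup of the bijections of `ℚ ∪ {∞}` generated by
`ρ`, `ρ'` and the parabolic `c`. -/
def Gamma (r : ℚ) (m : ℤ) : Subgroup (Equiv.Perm (Option ℚ)) :=
  Subgroup.closure {rhoPerm, rhoPerm', cPerm r m}

/-- `y` is in the `Γ_{r,n}`-orbit of `x` (where `m = 2n`). -/
def orbitRel (r : ℚ) (m : ℤ) (x y : Option ℚ) : Prop :=
  ∃ g ∈ Gamma r m, g x = y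

/-! ### Continued fractions -/

/-- The matrix `[[0,1],[1,b₁]] ⋯ [[0,1],[1,b_l]]` of a continued fraction. -/
def cfMat : List ℤ → Matrix (Fin 2) (Fin 2) ℤ
  | [] => 1
  | b :: L => !![0, 1; 1, b] * cfMat L

/-- The value in `ℚ ∪ {∞}` of the continued fraction
`[b₁, …, b_l] = 1/(b₁ + 1/(b₂ + ⋯ + 1/b_l))`: the image of `0` under the Möbius transformation
of `cfMat`. -/
def cfValue (L : List ℤ) : Option ℚ :=
  mfun ((cfMat L 0 0 : ℤ) : ℚ) ((cfMat L 0 1 : ℤ) : ℚ) ((cfMat L 1 0 : ℤ) : ℚ)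
    ((cfMat L 1 1 : ℤ) : ℚ) (some 0)

/-! ### Small cancellation notions -/

/-- The symmetrized set `R` generated by `u_r^n`: all cyclic permutations of the reduced words
of `u_r^n` and of `u_r^{−n}`. -/
def SymmSet (r : ℚ) (n : ℕ) : Set FG :=
  {w | (∃ k, w.toWord = (uWord r ^ n).toWord.rotate k) ∨
       (∃ k, w.toWord = ((uWord r ^ n)⁻¹).toWord.rotate k)}

/-- A piece relative to `R`: a nonempty word which is a common initial segment of two distinct
elements of `R`. -/
def IsPiece (r : ℚ) (n : ℕ) (w : FG) : Prop :=
  w ≠ 1 ∧ ∃ x ∈ SymmSet r n, ∃ y ∈ SymmSet r n, x ≠ y ∧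
    w.toWord <+: x.toWord ∧ w.toWord <+: y.toWord

/-- `w` is a product of `k` pieces: a concatenation, without cancellation, of `k` pieces. -/
def IsProductOfPieces (r : ℚ) (n : ℕ) (k : ℕ) (w : FG) : Prop :=
  ∃ ws : List FG, ws.length = k ∧ (∀ v ∈ ws, IsPiece r n v) ∧
    w.toWord = (ws.map FreeGroup.toWord).flatten

/-- The product `x * y` is reduced without cancellation. -/
def NoCancel (x y : FG) : Prop := (x * y).toWord = x.toWord ++ y.toWord

/-- Small cancellation condition `C(p)`: no element of `R` is a product of fewer than `p`
pieces. -/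
def SatisfiesC (r : ℚ) (n : ℕ) (p : ℕ) : Prop :=
  ∀ w ∈ SymmSet r n, ∀ k < p, ¬ IsProductOfPieces r n k w

/-- Small cancellation condition `T(4)`. -/
def SatisfiesT4 (r : ℚ) (n : ℕ) : Prop :=
  ∀ r₁ ∈ SymmSet r n, ∀ r₂ ∈ SymmSet r n, ∀ r₃ ∈ SymmSet r n,
    r₂ ≠ r₁⁻¹ → r₃ ≠ r₂⁻¹ → r₁ ≠ r₃⁻¹ →
    NoCancel r₁ r₂ ∨ NoCancel r₂ r₃ ∨ NoCancel r₃ r₁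

/-- `w` is a subword of the cyclic word `(u)`: an initial segment of some cyclic permutation
of the reduced word of `u`. -/
def IsCyclicSubword (w u : FG) : Prop := ∃ k, w.toWord <+: u.toWord.rotate k

end Heckoid

/-!
Reading `u_r` letter by letter, its `i`-th letter is `x_i^{ε_i}` with `x_i = a` for even `i` and
`x_i = b` for odd `i`, for `0 ≤ i < 2p`: the identity `ε_{-i} = -ε_i` (valid for `p ∤ i`, since
`q` and `p` are coprime) turns the second half `b^{±1} v⁻¹` or `a⁻¹ v⁻¹` into the continuation of
the first. The bi-infinite word `i ↦ x_i^{ε_i}` is `2p`-periodic and reduced, so `u_r^n` is the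
reading of its first `2pn` letters. Since `⌊(i + p)q/p⌋ = ⌊iq/p⌋ + q`, shifting by `p` acts on
letters by a fixed involution `τ` commuting with inversion. Hence every element of `R` is read off
from a sequence `g` with `g (j + p) = τ (g j)`; such a sequence is determined by its first `p`
letters, so two elements of `R` with a common initial segment of length `p` coincide.
-/

namespace Heckoid

open FreeGroup

section Words

variable {α : Type*}

theorem rotate_map_range {N : ℕ} {f : ℤ → α} (hf : Function.Periodic f N) (k : ℕ) :
    ((List.range N).map fun i : ℕ => f i).rotate k =
      (List.range N).map fun j : ℕ => f (j + k) := by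
  refine List.ext_getElem (by simp) fun j _ _ => ?_
  simp only [List.getElem_rotate, List.length_map, List.length_range, List.getElem_map,
    List.getElem_range]
  have hdiv : (((j + k) % N : ℕ) : ℤ) = j + k - ((j + k) / N : ℕ) * N := by
    rw [eq_sub_iff_add_eq]
    exact_mod_cast Nat.mod_add_div' (j + k) N
  rw [hdiv, hf.sub_nat_mul_eq]

theorem flatten_replicate_map_range {N : ℕ} {f : ℤ → α} (hf : Function.Periodic f N) (n : ℕ) :
    (List.replicate n ((List.range N).map fun i : ℕ => f i)).flatten =
      (List.range (N * n)).map fun i : ℕ => f i := by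
  induction n with
  | zero => simp
  | succ n ih =>
    rw [List.replicate_succ', List.flatten_append, ih, Nat.mul_succ, List.range_add,
      List.map_append, List.map_map]
    simp only [List.flatten_singleton, Function.comp_def, Nat.cast_add, Nat.cast_mul,
      add_comm ((N : ℤ) * n)]
    congr 1
    refine List.map_congr_left fun i _ => ?_
    rw [mul_comm, hf.nat_mul n]

theorem map_range_two_mul_succ (f : ℤ → α) (m : ℕ) :
    (List.range (2 * (m + 1))).map (fun i : ℕ => f i) =
      f 0 :: (List.range m).map (fun i : ℕ => f (i + 1)) ++
        f (m + 1) :: (List.range m).map (fun i : ℕ => f (m + 2 + i)) := by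
  rw [two_mul, List.range_add, List.range_succ_eq_map]
  simp only [List.map_append, List.map_cons, List.map_map, Function.comp_def, Nat.cast_add,
    Nat.cast_succ, Nat.cast_zero, List.cons_append]
  congr 4 with i
  congr 1
  ring

theorem eq_of_forall_lt_of_shift {p : ℕ} (hp : 0 < p) {τ : α → α} {g h : ℕ → α}
    (hg : ∀ j, g (j + p) = τ (g j)) (hh : ∀ j, h (j + p) = τ (h j))
    (hlt : ∀ j < p, g j = h j) : g = h := by
  funext j
  induction j using Nat.strong_induction_on with
  | _ j ih =>
    rcases lt_or_ge j p with hj | hj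
    · exact hlt j hj
    · obtain ⟨i, rfl⟩ := Nat.exists_eq_add_of_le' hj
      rw [hg, hh, ih i (by omega)]

theorem eq_of_prefix_map_range {w : List α} {N j : ℕ} {g h : ℕ → α}
    (hg : w <+: (List.range N).map g) (hh : w <+: (List.range N).map h) (hj : j < w.length) :
    g j = h j := by
  have hjN : j < N := by simpa using hj.trans_le hg.length_le
  simpa [hjN] using (hg.getElem hj).symm.trans (hh.getElem hj)

def invLetter (x : α × Bool) : α × Bool := (x.1, !x.2)

theorem invRev_map_range (N : ℕ) (f : ℤ → α × Bool) :
    invRev ((List.range N).map fun i : ℕ => f i) =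
      (List.range N).map fun j : ℕ => invLetter (f (N - 1 - j)) := by
  refine List.ext_getElem (by simp [invRev]) fun j _ h₂ => ?_
  simp only [List.length_map, List.length_range] at h₂
  simp only [invRev, List.getElem_reverse, List.getElem_map, List.getElem_range, invLetter,
    List.length_map, List.length_range]
  have hcast : ((N - 1 - j : ℕ) : ℤ) = N - 1 - j := by omega
  rw [hcast]

theorem prod_map_mk_singleton {β : Type*} (l : List β) (f : β → α × Bool) :
    (l.map fun i => mk [f i]).prod = mk (l.map f) := by
  induction l with
  | nil => rfl
  | cons a l ih => rw [List.map_cons, List.prod_cons, ih, mul_mk]; rfl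

theorem of_zpow_neg_one_pow (a : α) (e : ℤ) :
    of a ^ ((-1 : ℤ) ^ e.natAbs) = mk [(a, decide (e % 2 = 0))] := by
  rcases Int.emod_two_eq_zero_or_one e with he | he
  · rw [(Int.natAbs_even.mpr (Int.even_iff.mpr he)).neg_one_pow, zpow_one, he]; rfl
  · rw [(Int.natAbs_odd.mpr (Int.odd_iff.mpr he)).neg_one_pow, zpow_neg_one, he]; rfl

end Words

section Letters

variable {q : ℤ} {p : ℕ}

/-- The letter `x_i^{ε_i}`, as an element of `Fin 2 × Bool` (`true` for exponent `+1`); for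
`p > 0` the Euclidean quotient `i * q / p` is `⌊iq/p⌋`. -/
def uLetter (q : ℤ) (p : ℕ) (i : ℤ) : Fin 2 × Bool :=
  (if i % 2 = 0 then 0 else 1, decide (i * q / p % 2 = 0))

def shiftLetter (q : ℤ) (p : ℕ) (x : Fin 2 × Bool) : Fin 2 × Bool :=
  (if p % 2 = 0 then x.1 else 1 - x.1, if q % 2 = 0 then x.2 else !x.2)

theorem shiftLetter_involutive : Function.Involutive (shiftLetter q p) := by
  rintro ⟨c, s⟩
  simp only [shiftLetter]
  split_ifs <;> simp

theorem shiftLetter_invLetter (x : Fin 2 × Bool) :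
    shiftLetter q p (invLetter x) = invLetter (shiftLetter q p x) := by
  simp only [shiftLetter, invLetter]
  split_ifs <;> rfl

theorem uLetter_add_den (hp : 0 < p) (i : ℤ) :
    uLetter q p (i + p) = shiftLetter q p (uLetter q p i) := by
  have hdiv : (i + p) * q / p = i * q / p + q := by
    rw [add_mul, mul_comm (p : ℤ) q, Int.add_mul_ediv_right _ _ (by omega)]
  simp only [uLetter, shiftLetter, hdiv, Prod.mk.injEq]
  constructor
  · split_ifs <;> first | rfl | decide | omega
  · generalize i * q / p = X
    split_ifs
    · rw [decide_eq_decide]; omega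
    · rw [← decide_not, decide_eq_decide]; omega

theorem uLetter_periodic (hp : 0 < p) : Function.Periodic (uLetter q p) (2 * p : ℕ) := by
  intro i
  rw [Nat.cast_mul, Nat.cast_two, two_mul, ← add_assoc, uLetter_add_den hp, uLetter_add_den hp,
    shiftLetter_involutive]

theorem uLetter_neg (hq : q.natAbs.Coprime p) (hp : 0 < p) {t : ℤ} (ht : ¬ (p : ℤ) ∣ t) :
    uLetter q p (-t) = invLetter (uLetter q p t) := by
  have hcop : IsCoprime (p : ℤ) q := Int.isCoprime_iff_nat_coprime.mpr (by simpa using hq.symm)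
  have htq : ¬ (p : ℤ) ∣ t * q := fun h => ht (hcop.dvd_of_dvd_mul_right h)
  have hdiv : -t * q / p = -(t * q / p) - 1 := by
    rw [neg_mul, Int.neg_ediv, if_neg htq, Int.sign_natCast_of_ne_zero (by omega)]
  simp only [uLetter, invLetter, hdiv, Prod.mk.injEq]
  constructor
  · split_ifs <;> first | rfl | omega
  · generalize t * q / p = X
    rw [← decide_not, decide_eq_decide]
    omega

theorem genAt_zpow_epsSign (i : ℕ) :
    genAt i ^ epsSign q p i = mk [uLetter q p i] := by
  have hgen : genAt i = of (if (i : ℤ) % 2 = 0 then 0 else 1) := by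
    unfold genAt ga gb
    split_ifs <;> first | rfl | omega
  rw [hgen, epsSign, of_zpow_neg_one_pow, Int.fdiv_eq_ediv_of_nonneg _ (Int.natCast_nonneg p)]
  rfl

theorem vWord_eq_mk :
    vWord q p = mk ((List.range (p - 1)).map fun i : ℕ => uLetter q p (i + 1)) := by
  rw [vWord, List.map_congr_left fun i _ => genAt_zpow_epsSign (i + 1),
    prod_map_mk_singleton]
  simp only [Nat.cast_add, Nat.cast_one]

theorem isReduced_map_range_uLetter (N : ℕ) :
    FreeGroup.IsReduced ((List.range N).map fun i : ℕ => uLetter q p i) := by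
  rw [FreeGroup.IsReduced, List.isChain_map]
  cases N with
  | zero => simp
  | succ N =>
    rw [List.isChain_range_succ]
    intro i _ h
    simp only [uLetter] at h
    split_ifs at h <;> omega

theorem ga_eq_mk : ga = mk [uLetter q p 0] := by
  rw [show uLetter q p 0 = (0, true) by simp [uLetter]]
  rfl

theorem uLetter_den (hp : 0 < p) :
    uLetter q p p = (if p % 2 = 0 then 0 else 1, decide (q % 2 = 0)) := by
  rw [uLetter, Int.mul_ediv_cancel_left q (by omega)]
  congr 1
  split_ifs <;> first | rfl | omega

theorem gb_zpow_eq_mk_of_odd (hp : p % 2 = 1) :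
    gb ^ ((-1 : ℤ) ^ q.natAbs) = mk [uLetter q p p] := by
  rw [gb, of_zpow_neg_one_pow, uLetter_den (by omega), if_neg (by omega)]

theorem inv_ga_eq_mk_of_even (hq : q.natAbs.Coprime p) (hp₀ : 0 < p) (hp : p % 2 = 0) :
    ga⁻¹ = mk [uLetter q p p] := by
  have hq₂ : q % 2 = 1 := by
    have h := Nat.Coprime.coprime_dvd_right (Nat.dvd_of_mod_eq_zero hp) hq
    rw [Nat.coprime_two_right, Nat.odd_iff] at h
    omega
  rw [uLetter_den hp₀, if_pos hp, hq₂]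
  rfl

theorem inv_vWord_eq_mk (hq : q.natAbs.Coprime p) {m : ℕ} (hm : p = m + 1) :
    (vWord q p)⁻¹ = mk ((List.range m).map fun i : ℕ => uLetter q p (m + 2 + i)) := by
  subst hm
  rw [vWord_eq_mk, inv_mk, Nat.add_sub_cancel, invRev_map_range m (fun i => uLetter q _ (i + 1))]
  refine congrArg mk (List.map_congr_left fun j hj => ?_)
  have hj := List.mem_range.mp hj
  have hnd : ¬ ((m + 1 : ℕ) : ℤ) ∣ (m - 1 - j + 1) := fun h => by
    have := Int.eq_zero_of_dvd_of_natAbs_lt_natAbs h (by omega)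
    omega
  rw [← uLetter_neg hq (by omega) hnd, ← uLetter_periodic (by omega)]
  congr 1
  push_cast
  ring

theorem mk_map_range_uLetter (hq : q.natAbs.Coprime p) (hp : 0 < p) :
    mk ((List.range (2 * p)).map fun i : ℕ => uLetter q p i) =
      mk [uLetter q p 0] * vWord q p * mk [uLetter q p p] * (vWord q p)⁻¹ := by
  obtain ⟨m, hm⟩ := Nat.exists_eq_add_one_of_ne_zero hp.ne'
  rw [inv_vWord_eq_mk hq hm, vWord_eq_mk, mul_mk, mul_mk, mul_mk, hm, map_range_two_mul_succ,
    Nat.add_sub_cancel]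
  simp

end Letters

theorem uWord_eq_mk (r : ℚ) :
    uWord r = mk ((List.range (2 * r.den)).map fun i : ℕ => uLetter r.num r.den i) := by
  rw [mk_map_range_uLetter r.reduced r.den_pos, uWord, ← ga_eq_mk]
  split_ifs with h
  · rw [gb_zpow_eq_mk_of_odd h]
  · rw [inv_ga_eq_mk_of_even r.reduced r.den_pos (by omega)]

theorem toWord_uWord_pow (r : ℚ) (n : ℕ) :
    (uWord r ^ n).toWord = (List.range (2 * r.den * n)).map fun i : ℕ => uLetter r.num r.den i := by
  rw [uWord_eq_mk, pow_mk, flatten_replicate_map_range (uLetter_periodic r.den_pos), toWord_mk,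
    (isReduced_map_range_uLetter _).reduce_eq]

theorem exists_shift_of_mem_symmSet {r : ℚ} {n : ℕ} {x : FG} (hx : x ∈ SymmSet r n) :
    ∃ g : ℕ → Fin 2 × Bool, (∀ j, g (j + r.den) = shiftLetter r.num r.den (g j)) ∧
      x.toWord = (List.range (2 * r.den * n)).map g := by
  have hper : Function.Periodic (uLetter r.num r.den) (2 * r.den * n : ℕ) := by
    simpa [mul_comm] using (uLetter_periodic (q := r.num) r.den_pos).nat_mul n
  have hshift := uLetter_add_den (q := r.num) r.den_pos
  rcases hx with ⟨k, hk⟩ | ⟨k, hk⟩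
  · rw [toWord_uWord_pow, rotate_map_range hper] at hk
    refine ⟨fun j => uLetter r.num r.den (j + k), fun j => ?_, hk⟩
    rw [← hshift]
    exact congrArg _ (by push_cast; ring)
  · have hrev : Function.Periodic
        (fun i => invLetter (uLetter r.num r.den ((2 * r.den * n : ℕ) - 1 - i)))
        (2 * r.den * n : ℕ) :=
      fun i => by simp only [sub_add_eq_sub_sub, hper.sub_eq]
    rw [toWord_inv, toWord_uWord_pow, invRev_map_range, rotate_map_range hrev] at hk
    refine ⟨fun j => invLetter (uLetter r.num r.den ((2 * r.den * n : ℕ) - 1 - (j + k))),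
      fun j => ?_, hk⟩
    have h := hshift ((2 * r.den * n : ℕ) - 1 - (j + k) - r.den)
    rw [sub_add_cancel] at h
    rw [shiftLetter_invLetter, h, shiftLetter_involutive]
    exact congrArg (invLetter ∘ uLetter _ _) (by push_cast; ring)

theorem piece_length_lt_general (r : ℚ) (n : ℕ) :
    ∀ w : FG, IsPiece r n w → w.toWord.length < r.den := by
  rintro w ⟨-, x, hx, y, hy, hxy, hwx, hwy⟩
  by_contra! hlen
  obtain ⟨g, hg, hxg⟩ := exists_shift_of_mem_symmSet hx
  obtain ⟨h, hh, hyh⟩ := exists_shift_of_mem_symmSet hy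
  rw [hxg] at hwx
  rw [hyh] at hwy
  have hgh : g = h := eq_of_forall_lt_of_shift r.den_pos hg hh fun j hj =>
    eq_of_prefix_map_range hwx hwy (hj.trans_le hlen)
  exact hxy (toWord_injective (by rw [hxg, hyh, hgh]))

/-- Every piece relative to the symmetrized set generated by `u_r^n` has
length strictly less than `p = r.den`, i.e., strictly less than half of the length `2p`
of `u_r`. -/
theorem piece_length_lt (r : ℚ) (hr0 : 0 < r) (hr1 : r < 1) (n : ℕ) (hn : 2 ≤ n) :
    ∀ w : FG, IsPiece r n w → w.toWord.length < r.den :=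
  piece_length_lt_general r n

end Heckoid
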